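/- arXiv:2604.16737 — 2 statements merged into one kernel-verified Lean document; each statement's English description precedes it below -/
import Mathlib

section
/- If μ is a Möbius transformation preserving the unit circle, then all welding Grunsky coefficients λ̂_{k,ℓ} of μ with |k| ≥ 1 and |ℓ| ≥ 1 vanish; that is, the Grunsky matrix Λ_μ is zero. -/
/-!
For `μ z = e (z - a) / (1 - ā z)` the difference quotient factorizes as
`(μ z - μ w) / (z - w) = e (1 - |a|²) / ((1 - ā z) (1 - ā w))`, so off the diagonal
`log |(μ z - μ w) / (z - w)|` is a sum `f z + g w` of functions of one variable each.
In the double Fourier integral every term then carries a factor `∫₀^{2π} e^{-iks} ds`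
or `∫₀^{2π} e^{-iℓt} dt`, which vanishes for `k, ℓ ≠ 0`.
-/

open MeasureTheory Complex ComplexConjugate

lemma integral_Ioc_exp_neg_int_mul_I_eq_zero {k : ℤ} (hk : k ≠ 0) :
    ∫ s in Set.Ioc (0 : ℝ) (2 * Real.pi), exp (-(k * s) * I) = 0 := by
  rw [← intervalIntegral.integral_of_le Real.two_pi_pos.le]
  simp_rw [show ∀ s : ℝ, -(k * s) * I = (-k * I) * s from fun s => by ring]
  rw [integral_exp_mul_complex (by simp [Complex.ext_iff, hk])]
  have hperiod : exp (-k * I * (2 * Real.pi)) = 1 := by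
    rw [show -k * I * (2 * Real.pi) = ((-k : ℤ) : ℂ) * (2 * Real.pi * I) by push_cast; ring]
    exact exp_int_mul_two_pi_mul_I (-k)
  push_cast
  rw [hperiod]
  simp

lemma volume_setOf_exp_mul_I_eq_exp_mul_I :
    volume {p : ℝ × ℝ | exp (p.1 * I) = exp (p.2 * I)} = 0 := by
  have hmeas : MeasurableSet {p : ℝ × ℝ | exp (p.1 * I) = exp (p.2 * I)} :=
    (isClosed_eq (by fun_prop) (by fun_prop)).measurableSet
  rw [Measure.volume_eq_prod, Measure.measure_prod_null hmeas]
  refine Filter.Eventually.of_forall fun s => measure_mono_null ?_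
    ((Set.countable_range fun n : ℤ => s - n * (2 * Real.pi)).measure_zero _)
  intro t ht
  obtain ⟨n, hn⟩ := exp_eq_exp_iff_exists_int.1 ht
  refine ⟨n, ofReal_injective (mul_right_cancel₀ I_ne_zero ?_)⟩
  push_cast
  linear_combination hn

lemma integral_prod_add_mul_mul_eq_zero {α β 𝕜 : Type*} [MeasurableSpace α]
    [MeasurableSpace β] [RCLike 𝕜] {ν : Measure α} {ρ : Measure β} [SFinite ν] [SFinite ρ]
    {f u : α → 𝕜} {g v : β → 𝕜}
    (hfu : Integrable (fun x => f x * u x) ν) (hu : Integrable u ν)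
    (hgv : Integrable (fun y => g y * v y) ρ) (hv : Integrable v ρ)
    (hu₀ : ∫ x, u x ∂ν = 0) (hv₀ : ∫ y, v y ∂ρ = 0) :
    ∫ p, (f p.1 + g p.2) * (u p.1 * v p.2) ∂ν.prod ρ = 0 := by
  have hexpand : (fun p : α × β => (f p.1 + g p.2) * (u p.1 * v p.2)) =
      fun p => f p.1 * u p.1 * v p.2 + u p.1 * (g p.2 * v p.2) := by
    funext p; ring
  rw [hexpand, integral_add (hfu.mul_prod hv) (hu.mul_prod hgv),
    integral_prod_mul (fun x => f x * u x) v, integral_prod_mul u (fun y => g y * v y),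
    hu₀, hv₀]
  simp

lemma integral_welding_eq_zero_of_log_norm_eq_add (φ : ℂ → ℂ) {f g : ℝ → ℝ}
    (hf : Continuous f) (hg : Continuous g)
    (hsplit : ∀ s t : ℝ, exp (s * I) ≠ exp (t * I) →
      Real.log ‖(φ (exp (s * I)) - φ (exp (t * I))) / (exp (s * I) - exp (t * I))‖ =
        f s + g t)
    {k ℓ : ℤ} (hk : k ≠ 0) (hl : ℓ ≠ 0) :
    ∫ p in Set.Ioc (0 : ℝ) (2 * Real.pi) ×ˢ Set.Ioc (0 : ℝ) (2 * Real.pi),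
      (Real.log ‖(φ (exp (p.1 * I)) - φ (exp (p.2 * I))) /
        (exp (p.1 * I) - exp (p.2 * I))‖ : ℂ) * exp (-(k * p.1 + ℓ * p.2) * I) = 0 := by
  have hoff_diag : ∀ᵐ p : ℝ × ℝ, exp (p.1 * I) ≠ exp (p.2 * I) :=
    measure_eq_zero_iff_ae_notMem.1 volume_setOf_exp_mul_I_eq_exp_mul_I
  have hae : ∀ᵐ p : ℝ × ℝ, (Real.log ‖(φ (exp (p.1 * I)) - φ (exp (p.2 * I))) /
        (exp (p.1 * I) - exp (p.2 * I))‖ : ℂ) * exp (-(k * p.1 + ℓ * p.2) * I) =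
      ((f p.1 : ℂ) + g p.2) * (exp (-(k * p.1) * I) * exp (-(ℓ * p.2) * I)) := by
    filter_upwards [hoff_diag] with p hp
    rw [hsplit p.1 p.2 hp, ← exp_add]
    push_cast
    ring_nf
  rw [integral_congr_ae (ae_restrict_of_ae hae), Measure.volume_eq_prod,
    ← Measure.prod_restrict]
  have hint : ∀ F : ℝ → ℂ, Continuous F →
      Integrable F (volume.restrict (Set.Ioc (0 : ℝ) (2 * Real.pi))) :=
    fun F hF => hF.integrableOn_Ioc
  exact integral_prod_add_mul_mul_eq_zero (f := fun s => (f s : ℂ)) (g := fun t => (g t : ℂ))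
    (hint _ (by fun_prop)) (hint _ (by fun_prop)) (hint _ (by fun_prop)) (hint _ (by fun_prop))
    (integral_Ioc_exp_neg_int_mul_I_eq_zero hk) (integral_Ioc_exp_neg_int_mul_I_eq_zero hl)

lemma one_sub_conj_mul_ne_zero {a z : ℂ} (ha : ‖a‖ < 1) (hz : ‖z‖ ≤ 1) :
    1 - conj a * z ≠ 0 := by
  intro h
  have hnorm : ‖a‖ * ‖z‖ = 1 := by
    rw [← RCLike.norm_conj a, ← norm_mul, ← sub_eq_zero.1 h, norm_one]
  nlinarith [norm_nonneg a, norm_nonneg z]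

lemma mobius_sub_div_sub (e a : ℂ) {z w : ℂ} (hz : 1 - conj a * z ≠ 0)
    (hw : 1 - conj a * w ≠ 0) (hzw : z ≠ w) :
    (e * ((z - a) / (1 - conj a * z)) - e * ((w - a) / (1 - conj a * w))) / (z - w) =
      e * (1 - a * conj a) / ((1 - conj a * z) * (1 - conj a * w)) := by
  rw [mul_div_assoc', mul_div_assoc', div_sub_div _ _ hz hw, div_div,
    div_eq_div_iff (mul_ne_zero (mul_ne_zero hz hw) (sub_ne_zero.2 hzw)) (mul_ne_zero hz hw)]
  ring

lemma log_norm_mobius_sub_div_sub {a e : ℂ} (ha : ‖a‖ < 1) (he : e ≠ 0) {z w : ℂ}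
    (hz : ‖z‖ ≤ 1) (hw : ‖w‖ ≤ 1) (hzw : z ≠ w) :
    Real.log ‖(e * ((z - a) / (1 - conj a * z)) - e * ((w - a) / (1 - conj a * w))) /
        (z - w)‖ =
      Real.log ‖e * (1 - a * conj a)‖ - Real.log ‖1 - conj a * z‖ -
        Real.log ‖1 - conj a * w‖ := by
  have hz' := one_sub_conj_mul_ne_zero ha hz
  have hw' := one_sub_conj_mul_ne_zero ha hw
  have ha' : 1 - a * conj a ≠ 0 := by
    rw [mul_conj, normSq_eq_norm_sq, ← ofReal_one, ← ofReal_sub, ofReal_ne_zero, sub_ne_zero]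
    nlinarith [norm_nonneg a]
  rw [mobius_sub_div_sub e a hz' hw' hzw, norm_div, norm_mul (1 - conj a * z),
    Real.log_div (by simpa using ⟨he, ha'⟩) (by simpa using ⟨hz', hw'⟩),
    Real.log_mul (by simpa using hz') (by simpa using hw'), sub_sub]

/-- for a Möbius transformation `μ(z) = e (z-a)/(1 - ā z)` preserving the unit
circle, all welding Grunsky coefficients `λ̂_{k,ℓ}` with `k, ℓ ≠ 0` vanish, i.e. the
welding Grunsky matrix `Λ_μ` is zero. -/
theorem mobius_grunsky_coefficients_vanish (a e : ℂ) (ha : Norm.norm a < 1)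
    (he : Norm.norm e = 1)
    (μ : ℂ → ℂ) (hμ : ∀ z, μ z = e * ((z - a) / (1 - (starRingEnd ℂ) a * z)))
    (k ℓ : ℤ) (hk : k ≠ 0) (hl : ℓ ≠ 0) :
    (1 / (2 * Real.pi) ^ 2 : ℂ) *
      ∫ p in (Set.Ioc (0:ℝ) (2 * Real.pi)) ×ˢ (Set.Ioc (0:ℝ) (2 * Real.pi)),
        ((Real.log (Norm.norm
            ((μ (Complex.exp (p.1 * Complex.I)) - μ (Complex.exp (p.2 * Complex.I))) /
              (Complex.exp (p.1 * Complex.I) - Complex.exp (p.2 * Complex.I)))) : ℝ) : ℂ) *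
          Complex.exp (-(k * p.1 + ℓ * p.2) * Complex.I) = 0 := by
  set h : ℝ → ℝ := fun s => Real.log ‖1 - conj a * exp (s * I)‖
  have hcont : Continuous h :=
    Continuous.log (by fun_prop) fun s =>
      norm_ne_zero_iff.2 (one_sub_conj_mul_ne_zero ha (norm_exp_ofReal_mul_I s).le)
  have he₀ : e ≠ 0 := norm_ne_zero_iff.1 (he ▸ one_ne_zero)
  refine mul_eq_zero_of_right _ (integral_welding_eq_zero_of_log_norm_eq_add μ
    (f := fun s => Real.log ‖e * (1 - a * conj a)‖ - h s) (g := fun t => -h t)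
    (by fun_prop) (by fun_prop) (fun s t hst => ?_) hk hl)
  rw [hμ, hμ, log_norm_mobius_sub_div_sub ha he₀ (norm_exp_ofReal_mul_I s).le
    (norm_exp_ofReal_mul_I t).le hst]
  ring
end

section
/- Let D be a Hilbert–Schmidt diagonal operator with entries δ_k ∈ [0, c], c < 1, and let Λ be a self-adjoint Hilbert–Schmidt operator whose nonzero eigenvalues are exactly the values (1 − (1±δ_k)^{−1}) (i.e., I − Λ is unitarily equivalent to diag((I−D)^{−1}, (I+D)^{−1})). Then the regularized Fredholm determinant satisfies det₂((I − Λ)^{−1}) = det(I − D²) = ∏_k (1 − δ_k²). -/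
/-!
Each factor `(1 + t) e^{-t}` of `det₂` is `1 + O(t²)`, so the product converges for
square-summable eigenvalues and may be split into the products over `+δ_k` and over `-δ_k`;
recombining them pairwise, the exponentials cancel and `(1 + δ_k)(1 - δ_k) = 1 - δ_k²`.
-/

/-- The regularized Fredholm determinant `det₂(I + T) = ∏ (1 + t_i) e^{-t_i}` of a
Hilbert–Schmidt operator `T`, expressed through its sequence of eigenvalues `t`. -/
noncomputable def det2OfEigenvalues {ι : Type*} (t : ι → ℝ) : ℝ :=
  ∏' i, (1 + t i) * Real.exp (-t i)

open Real

lemma abs_one_add_mul_exp_neg_sub_one_le {t : ℝ} (ht : |t| ≤ 1) :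
    |(1 + t) * exp (-t) - 1| ≤ 3 * t ^ 2 := by
  have hexp : |exp (-t) - 1 - -t| ≤ t ^ 2 := by
    simpa using abs_exp_sub_one_sub_id_le (x := -t) (by rwa [abs_neg])
  have hfactor : |1 + t| ≤ 2 := (abs_add_le (1 : ℝ) t).trans (by rw [abs_one]; linarith)
  calc |(1 + t) * exp (-t) - 1| = |(1 + t) * (exp (-t) - 1 - -t) - t ^ 2| := by
        congr 1; ring
    _ ≤ |(1 + t) * (exp (-t) - 1 - -t)| + |t ^ 2| := abs_sub _ _
    _ = |1 + t| * |exp (-t) - 1 - -t| + t ^ 2 := by rw [abs_mul, abs_of_nonneg (sq_nonneg t)]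
    _ ≤ 2 * t ^ 2 + t ^ 2 := by gcongr
    _ = 3 * t ^ 2 := by ring

lemma multipliable_one_add_mul_exp_neg {ι : Type*} {t : ι → ℝ}
    (ht : Summable fun i => t i ^ 2) : Multipliable fun i => (1 + t i) * exp (-t i) := by
  have hsmall : ∀ᶠ i in Filter.cofinite, |t i| ≤ 1 := by
    filter_upwards [ht.tendsto_cofinite_zero.eventually_le_const one_pos] with i hi
    exact (sq_le_one_iff_abs_le_one _).mp hi
  have hsum : Summable fun i => (1 + t i) * exp (-t i) - 1 :=
    Summable.of_norm_bounded_eventually (ht.mul_left 3)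
      (hsmall.mono fun i hi => abs_one_add_mul_exp_neg_sub_one_le hi)
  simpa using Real.multipliable_one_add_of_summable hsum

lemma one_add_mul_exp_neg_mul_one_sub_mul_exp (t : ℝ) :
    (1 + t) * exp (-t) * ((1 + -t) * exp t) = 1 - t ^ 2 := by
  have hexp : exp (-t) * exp t = 1 := by rw [← exp_add, neg_add_cancel, exp_zero]
  linear_combination (1 - t ^ 2) * hexp

lemma det2OfEigenvalues_sum_elim_neg {ι : Type*} {t : ι → ℝ}
    (ht : Summable fun i => t i ^ 2) :
    det2OfEigenvalues (Sum.elim t fun i => -t i) = ∏' i, (1 - t i ^ 2) := by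
  have hpos := multipliable_one_add_mul_exp_neg ht
  have hneg := multipliable_one_add_mul_exp_neg (t := fun i => -t i) (by simpa using ht)
  calc det2OfEigenvalues (Sum.elim t fun i => -t i)
      = (∏' i, (1 + t i) * exp (-t i)) * ∏' i, (1 + -t i) * exp (-(-t i)) :=
        Multipliable.tprod_sum hpos hneg
    _ = ∏' i, (1 - t i ^ 2) := by
        rw [← hpos.tprod_mul hneg]
        exact tprod_congr fun i => by
          rw [neg_neg]; exact one_add_mul_exp_neg_mul_one_sub_mul_exp (t i)

theorem det2_of_one_sub_grunsky_inverse_general (δ : ℕ → ℝ)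
    (hHS : Summable fun k => δ k ^ 2) :
    det2OfEigenvalues (Sum.elim (fun k : ℕ => δ k) (fun k : ℕ => -δ k)) =
      ∏' k : ℕ, (1 - δ k ^ 2) :=
  det2OfEigenvalues_sum_elim_neg hHS

/-- if `D` is a Hilbert–Schmidt diagonal operator with entries
`δ_k ∈ [0, c]`, `c < 1`, and `Λ` is a self-adjoint Hilbert–Schmidt operator with
`I - Λ` unitarily equivalent to `diag((I-D)⁻¹, (I+D)⁻¹)` — so that
`(I-Λ)⁻¹ = I + T` where `T = Λ(I-Λ)⁻¹` is Hilbert–Schmidt with eigenvalues `±δ_k` — then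
`det₂((I-Λ)⁻¹) = det(I - D²) = ∏_k (1 - δ_k²)`. -/
theorem det2_of_one_sub_grunsky_inverse (c : ℝ) (hc : c < 1) (δ : ℕ → ℝ)
    (hδ : ∀ k, 0 ≤ δ k ∧ δ k ≤ c) (hHS : Summable fun k => δ k ^ 2) :
    det2OfEigenvalues (Sum.elim (fun k : ℕ => δ k) (fun k : ℕ => -δ k)) =
      ∏' k : ℕ, (1 - δ k ^ 2) :=
  det2_of_one_sub_grunsky_inverse_general δ hHS
end
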